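/- arXiv:1009.3280 — 10 statements merged into one kernel-verified Lean document; each statement's English description precedes it below -/
import Mathlib

section
/- If u ∈ GL_n(K) satisfies u·M_n(O)·u⁻¹ = M_n(O), then u = c·g for some scalar c ∈ K^× and some g ∈ GL_n(O) (a matrix with entries in O whose determinant is a unit of O); in particular det(u) ∈ O^×·(K^×)ⁿ, i.e., det(u) = w·cⁿ for some unit w of O and some c ∈ K^×. -/
/-!
Scale `u` and `u⁻¹` by entries of maximal valuation: `u = c • g` and `u⁻¹ = c' • h` with
`g`, `h` integral and `g i j = h k l = 1`. Conjugating the matrix unit `E_{jk}` by `u` gives an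
integral matrix whose `(i, l)` entry is `c * c'`, so `c * c' ∈ O`; then `g * ((c * c') • h) = 1`
shows that `g` is invertible over `O`.
-/

/-- `M_n(O)` viewed as a subset of `M_n(K)`: matrices all of whose entries are integral. -/
def MatO (O K : Type*) [CommRing O] [Field K] [Algebra O K] (n : ℕ) :
    Set (Matrix (Fin n) (Fin n) K) :=
  {a | ∀ i j : Fin n, a i j ∈ (algebraMap O K).range}

theorem ValuationRing.exists_forall_inv_mul_mem_range {O K ι : Type*} [CommRing O] [IsDomain O]
    [ValuationRing O] [Field K] [Algebra O K] [IsFractionRing O K] [Finite ι]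
    (x : ι → K) (hx : x ≠ 0) :
    ∃ i, x i ≠ 0 ∧ ∀ j, (x i)⁻¹ * x j ∈ (algebraMap O K).range := by
  set v := ValuationRing.valuation O K
  obtain ⟨j₀, hj₀⟩ := Function.ne_iff.mp hx
  have : Nonempty ι := ⟨j₀⟩
  obtain ⟨i, hi⟩ := Finite.exists_max (v ∘ x)
  have hxi : x i ≠ 0 := fun h => hj₀ <| v.zero_iff.mp <| le_zero_iff.mp <| by
    simpa [h] using hi j₀
  refine ⟨i, hxi, fun j => ?_⟩
  rw [← ValuationRing.range_algebraMap_eq, Valuation.mem_integer_iff, map_mul, map_inv₀]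
  exact inv_mul_le_one_of_le₀ (hi j) zero_le

theorem Matrix.exists_eq_smul_map_of_ne_zero {O K m n : Type*} [CommRing O] [IsDomain O]
    [ValuationRing O] [Field K] [Algebra O K] [IsFractionRing O K] [Finite m] [Finite n]
    (M : Matrix m n K) (hM : M ≠ 0) :
    ∃ (c : Kˣ) (g : Matrix m n O) (i : m) (j : n),
      g i j = 1 ∧ M = (c : K) • g.map (algebraMap O K) := by
  obtain ⟨⟨i, j⟩, hij, hint⟩ :=
    ValuationRing.exists_forall_inv_mul_mem_range (O := O) (fun p : m × n => M p.1 p.2)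
      fun h => hM <| funext₂ fun k l => congrFun h (k, l)
  choose g hg using hint
  refine ⟨Units.mk0 _ hij, .of fun k l => g (k, l), i, j, ?_, ?_⟩
  · exact IsFractionRing.injective O K <| by simpa [hg] using inv_mul_cancel₀ hij
  · ext k l
    simp [hg, hij]

theorem Matrix.mul_single_one_mul_apply {α l m n o : Type*} [Fintype m] [Fintype n]
    [DecidableEq m] [DecidableEq n] [Semiring α]
    (A : Matrix l m α) (B : Matrix n o α) (i : l) (j : m) (k : n) (r : o) :
    (A * single j k (1 : α) * B) i r = A i j * B k r := by
  rw [Matrix.mul_assoc, Matrix.mul_apply, Finset.sum_eq_single j]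
  · rw [single_mul_apply_same, one_mul]
  · intro x _ hx
    rw [single_mul_apply_of_ne _ _ _ _ _ hx, mul_zero]
  · simp

theorem Matrix.isUnit_det_of_smul_map_mul_smul_map_eq_one {O K n : Type*} [CommRing O]
    [CommRing K] [Algebra O K] [FaithfulSMul O K] [Fintype n] [DecidableEq n]
    {g h : Matrix n n O} {c c' : K} {s : O} (hs : algebraMap O K s = c * c')
    (hgh : (c • g.map (algebraMap O K)) * (c' • h.map (algebraMap O K)) = 1) :
    IsUnit g.det := by
  refine isUnit_det_of_right_inverse (B := s • h) <|
    Matrix.map_injective (FaithfulSMul.algebraMap_injective O K) ?_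
  dsimp only
  rw [Matrix.map_mul, Matrix.map_one _ (map_zero _) (map_one _), ← hgh,
    Matrix.map_smul' _ _ _ (map_mul _), hs]
  simp only [Matrix.smul_mul, Matrix.mul_smul, smul_smul]
  rw [mul_comm c' c]

theorem conj_stabilizer_matrix_ring_general (O K : Type*) [CommRing O] [IsDomain O]
    [IsDiscreteValuationRing O] [Field K] [Algebra O K] [IsFractionRing O K]
    (n : ℕ) (u : GL (Fin n) K)
    (hu : (fun a => (u : Matrix (Fin n) (Fin n) K) * a *
        ((↑u⁻¹ : Matrix (Fin n) (Fin n) K))) '' MatO O K n = MatO O K n) :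
    (∃ (c : Kˣ) (g : Matrix (Fin n) (Fin n) K),
        (∀ i j : Fin n, g i j ∈ (algebraMap O K).range) ∧
        (∃ w : Oˣ, g.det = algebraMap O K w) ∧
        (u : Matrix (Fin n) (Fin n) K) = (c : K) • g) ∧
      ∃ (w : Oˣ) (c : Kˣ),
        (u : Matrix (Fin n) (Fin n) K).det = algebraMap O K w * (c : K) ^ n := by
  rcases isEmpty_or_nonempty (Fin n) with hn | hn
  · exact ⟨⟨1, u, isEmptyElim, ⟨1, by simp⟩, (one_smul K _).symm⟩, 1, 1, by simp⟩
  obtain ⟨c, g, i, j, hgij, hug⟩ :=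
    Matrix.exists_eq_smul_map_of_ne_zero (O := O) _ u.ne_zero
  obtain ⟨c', h, k, l, hhkl, hvh⟩ :=
    Matrix.exists_eq_smul_map_of_ne_zero (O := O) _ u⁻¹.ne_zero
  obtain ⟨s, hs⟩ : (c * c' : K) ∈ (algebraMap O K).range := by
    have hconj : (u : Matrix (Fin n) (Fin n) K) * Matrix.single j k (1 : K) *
        (↑u⁻¹ : Matrix (Fin n) (Fin n) K) ∈ MatO O K n :=
      hu.subset ⟨(Matrix.single j k (1 : O)).map (algebraMap O K), fun _ _ => ⟨_, rfl⟩,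
        by simp⟩
    simpa [hug, hvh, Matrix.mul_single_one_mul_apply, hgij, hhkl, mul_comm]
      using hconj i l
  have hdet : IsUnit g.det := Matrix.isUnit_det_of_smul_map_mul_smul_map_eq_one hs <| by
    rw [← hug, ← hvh, u.mul_inv]
  have hdet_map : (g.map (algebraMap O K)).det = algebraMap O K hdet.unit :=
    (RingHom.map_det _ _).symm
  refine ⟨⟨c, g.map (algebraMap O K), fun a b => ⟨g a b, rfl⟩, ⟨hdet.unit, hdet_map⟩,
    hug⟩, hdet.unit, c, ?_⟩
  rw [hug, Matrix.det_smul, hdet_map, Fintype.card_fin, mul_comm]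

/-- If `u ∈ GL_n(K)` satisfies `u · M_n(O) · u⁻¹ = M_n(O)`, then `u = c • g` with
`c ∈ K^×` and `g ∈ GL_n(O)`; in particular `det u = w · cⁿ` with `w ∈ O^×`, `c ∈ K^×`. -/
theorem conj_stabilizer_matrix_ring (O K : Type*) [CommRing O] [IsDomain O]
    [IsDiscreteValuationRing O] [Field K] [Algebra O K] [IsFractionRing O K]
    (n : ℕ) (hn : 1 ≤ n) (u : GL (Fin n) K)
    (hu : (fun a => (u : Matrix (Fin n) (Fin n) K) * a *
        ((↑u⁻¹ : Matrix (Fin n) (Fin n) K))) '' MatO O K n = MatO O K n) :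
    (∃ (c : Kˣ) (g : Matrix (Fin n) (Fin n) K),
        (∀ i j : Fin n, g i j ∈ (algebraMap O K).range) ∧
        (∃ w : Oˣ, g.det = algebraMap O K w) ∧
        (u : Matrix (Fin n) (Fin n) K) = (c : K) • g) ∧
      ∃ (w : Oˣ) (c : Kˣ),
        (u : Matrix (Fin n) (Fin n) K).det = algebraMap O K w * (c : K) ^ n :=
  conj_stabilizer_matrix_ring_general O K n u hu
end

section
/- Let L₁ and L₂ be finitely generated O-submodules of Kⁿ that span Kⁿ over K. Then End(L₁) = End(L₂) if and only if L₂ = c·L₁ for some c ∈ K^×. -/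
/-!
Choose an `O`-basis `e` of `L₁`; it is also a `K`-basis of `Kⁿ`. The rank-one maps
`x ↦ eⱼ*(x) eᵢ` stabilise `L₁`, hence `L₂`. So for the `O`-submodule `J = eᵢ₀*(L₂)` of `K`,
every coordinate of every vector of `L₂` lies in `J`, and `J eᵢ ⊆ L₂` for all `i`. As `L₂` is
finitely generated, so is `J`; a finitely generated fractional ideal of a PID is principal,
`J = O c`, and then `L₂ = c L₁`.
-/

open scoped Matrix

/-- `End(L)`: the set of matrices in `M_n(K)` stabilizing the `O`-submodule `L` of `Kⁿ`
under matrix–vector multiplication. -/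
def MatEnd (O K : Type*) [CommRing O] [Field K] [Algebra O K] (n : ℕ)
    (L : Submodule O (Fin n → K)) : Set (Matrix (Fin n) (Fin n) K) :=
  {g | ∀ x ∈ L, g.mulVec x ∈ L}

section Lattice

open Submodule

variable {O K V : Type*} [CommRing O] [Field K] [Algebra O K]
  [AddCommGroup V] [Module K V] [Module O V] [IsScalarTower O K V]

theorem Submodule.FG.isPrincipal_of_isFractionRing [IsDomain O] [IsPrincipalIdealRing O]
    [IsFractionRing O K] {J : Submodule O K} (hJ : J.FG) : J.IsPrincipal :=
  FractionalIdeal.isPrincipal ⟨J, FractionalIdeal.isFractional_of_fg hJ⟩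

theorem Module.Basis.span_range_extendOfIsLattice [IsFractionRing O K] {κ : Type*}
    {L : Submodule O V} [L.IsLattice K] (b : Module.Basis κ O L) :
    span O (Set.range (b.extendOfIsLattice K)) = L := by
  have : ⇑(b.extendOfIsLattice K) = L.subtype ∘ b := funext fun k => by simp
  rw [this, Set.range_comp, ← map_span, b.span_eq, Submodule.map_top, range_subtype]

variable {ι : Type*} (b : Module.Basis ι K V) {L₁ L₂ : Submodule O V}

theorem Module.Basis.coord_smul_mem_of_stabilizes (hb : span O (Set.range b) = L₁)
    (hstab : ∀ f : Module.End K V, (∀ x ∈ L₁, f x ∈ L₁) → ∀ x ∈ L₂, f x ∈ L₂)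
    {y : V} (hy : y ∈ L₂) (i j : ι) : b.coord j y • b i ∈ L₂ := by
  subst hb
  let f := (b.coord j).smulRight (b i)
  have hf : span O (Set.range b) ≤ (span O (Set.range b)).comap (f.restrictScalars O) := by
    refine span_le.mpr (Set.range_subset_iff.mpr fun k => ?_)
    by_cases hk : j = k <;> simp [f, hk, subset_span (Set.mem_range_self i)]
  exact hstab f (fun x hx => hf hx) y hy

theorem Module.Basis.exists_coe_eq_image_smul_of_stabilizes [IsDomain O] [IsPrincipalIdealRing O]
    [IsFractionRing O K] (hb : span O (Set.range b) = L₁) (hL₂ : L₂.FG) (hne : L₂ ≠ ⊥)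
    (hstab : ∀ f : Module.End K V, (∀ x ∈ L₁, f x ∈ L₁) → ∀ x ∈ L₂, f x ∈ L₂) :
    ∃ c : Kˣ, (L₂ : Set V) = (fun x => (c : K) • x) '' (L₁ : Set V) := by
  obtain ⟨y₀, hy₀, hy₀_ne⟩ := exists_mem_ne_zero_of_ne_bot hne
  obtain ⟨i₀, hi₀⟩ : ∃ i, b.coord i y₀ ≠ 0 := by
    by_contra! h
    exact hy₀_ne (b.forall_coord_eq_zero_iff.mp h)
  set J := L₂.map ((b.coord i₀).restrictScalars O)
  have : J.IsPrincipal := (hL₂.map _).isPrincipal_of_isFractionRing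
  obtain ⟨c, hJ⟩ := IsPrincipal.principal J
  have coord_mem : ∀ y ∈ L₂, ∀ j, ∃ r : O, r • c = b.coord j y := fun y hy j =>
    mem_span_singleton.mp <| hJ ▸ ⟨_, b.coord_smul_mem_of_stabilizes hb hstab hy i₀ j, by simp⟩
  have smul_mem : ∀ i, c • b i ∈ L₂ := fun i => by
    obtain ⟨y, hy, hyc⟩ : c ∈ J := hJ ▸ mem_span_singleton_self c
    rw [← hyc]
    exact b.coord_smul_mem_of_stabilizes hb hstab hy i i₀
  have hc : c ≠ 0 := by
    rintro rfl
    obtain ⟨r, hr⟩ := coord_mem y₀ hy₀ i₀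
    exact hi₀ (by rw [← hr, smul_zero])
  refine ⟨Units.mk0 c hc, Set.ext fun y => ⟨fun hy => ?_, ?_⟩⟩
  · refine ⟨c⁻¹ • y, ?_, by simp [smul_smul, hc]⟩
    change c⁻¹ • y ∈ L₁
    rw [← hb, b.mem_span_iff_repr_mem O]
    intro j
    obtain ⟨r, hr⟩ := coord_mem y hy j
    refine ⟨r, ?_⟩
    rw [LinearEquiv.map_smul, Finsupp.smul_apply, smul_eq_mul, ← b.coord_apply, ← hr,
      Algebra.smul_def]
    field_simp
  · rintro ⟨x, hx, rfl⟩
    have : L₁ ≤ L₂.comap ((LinearMap.lsmul K V c).restrictScalars O) :=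
      hb ▸ span_le.mpr (Set.range_subset_iff.mpr smul_mem)
    exact this hx

end Lattice

section MatEnd

variable {O K : Type*} [CommRing O] [Field K] [Algebra O K] {n : ℕ}

theorem toMatrix'_mem_matEnd_iff {L : Submodule O (Fin n → K)} {f : Module.End K (Fin n → K)} :
    LinearMap.toMatrix' f ∈ MatEnd O K n L ↔ ∀ x ∈ L, f x ∈ L := by
  simp only [MatEnd, Set.mem_ofPred_eq, LinearMap.toMatrix'_mulVec]

theorem matEnd_eq_of_coe_eq_image_smul {L₁ L₂ : Submodule O (Fin n → K)} (c : Kˣ)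
    (h : (L₂ : Set (Fin n → K)) = (fun x => (c : K) • x) '' (L₁ : Set (Fin n → K))) :
    MatEnd O K n L₁ = MatEnd O K n L₂ := by
  have hmem : ∀ x, x ∈ L₂ ↔ c⁻¹ • x ∈ L₁ := fun x => by
    simp only [← SetLike.mem_coe, h, ← Units.smul_def, Set.image_smul,
      Set.mem_smul_set_iff_inv_smul_mem]
  ext g
  refine ⟨fun hg x hx => ?_, fun hg x hx => ?_⟩
  · rw [hmem, ← Matrix.mulVec_smul]
    exact hg _ ((hmem x).mp hx)
  · have := hg (c • x) ((hmem _).mpr (by simpa using hx))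
    rw [Matrix.mulVec_smul, hmem] at this
    simpa using this

end MatEnd

/-- For finitely generated `O`-lattices `L₁`, `L₂` spanning `Kⁿ`,
`End(L₁) = End(L₂)` if and only if `L₂ = c • L₁` for some `c ∈ K^×`. -/
theorem matEnd_eq_iff_smul (O K : Type*) [CommRing O] [IsDomain O]
    [IsDiscreteValuationRing O] [Field K] [Algebra O K] [IsFractionRing O K]
    (n : ℕ) (hn : 1 ≤ n) (L₁ L₂ : Submodule O (Fin n → K))
    (hL₁fg : L₁.FG) (hL₂fg : L₂.FG)
    (hL₁span : Submodule.span K (L₁ : Set (Fin n → K)) = ⊤)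
    (hL₂span : Submodule.span K (L₂ : Set (Fin n → K)) = ⊤) :
    MatEnd O K n L₁ = MatEnd O K n L₂ ↔
      ∃ c : Kˣ, (L₂ : Set (Fin n → K)) = (fun x => (c : K) • x) '' (L₁ : Set (Fin n → K)) := by
  refine ⟨fun hEnd => ?_, fun ⟨c, hc⟩ => matEnd_eq_of_coe_eq_image_smul c hc⟩
  have : L₁.IsLattice K := ⟨hL₁fg, hL₁span⟩
  have : Nonempty (Fin n) := ⟨⟨0, hn⟩⟩
  have hL₂_ne : L₂ ≠ ⊥ := by
    rintro rfl
    simp at hL₂span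
  let b := Module.Free.chooseBasis O L₁
  refine (b.extendOfIsLattice K).exists_coe_eq_image_smul_of_stabilizes
    b.span_range_extendOfIsLattice hL₂fg hL₂_ne fun f hf => ?_
  exact toMatrix'_mem_matEnd_iff.mp (hEnd ▸ toMatrix'_mem_matEnd_iff.mpr hf)
end

section
/- If u ∈ Spin(Q) satisfies u·ι(v)·u⁻¹ = ι(v) for every v ∈ V, then u = 1 or u = −1. -/
/-!
Since `u` is even, `involute u = u`, so `ι v * u - u * ι v = ι v * u - involute u * ι v`, which
is the contraction of `u` by `polar Q v ·`: a `u` commuting with every `ι v` is killed by all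
these contractions. Take an orthogonal basis `e₁, …, eₙ`; nondegeneracy makes every `eᵢ`
anisotropic. An element of the subalgebra generated by `e₁, …, eₖ` is `p + ι eₖ * q` with
`p, q` generated by `e₁, …, eₖ₋₁`, and contraction by `eₖ` sends it to `polar Q eₖ eₖ • q`.
By induction on `k`, an element killed by all contractions is a scalar `c`, and
`u * reverse u = 1` becomes `c * c = 1`.
-/

open CliffordAlgebra

/-- Membership in the spin group `Spin(Q)`: `u` is an invertible element of the even
Clifford subalgebra with `u·ū = 1` (where `ū` is the reversal) and `u·ι(V)·u⁻¹ = ι(V)`. -/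
def MemSpin {F V : Type*} [Field F] [AddCommGroup V] [Module F V]
    (Q : QuadraticForm F V) (u : CliffordAlgebra Q) : Prop :=
  IsUnit u ∧ u ∈ CliffordAlgebra.even Q ∧ u * reverse u = 1 ∧
    (fun x => u * x * Ring.inverse u) '' Set.range (ι Q) = Set.range (ι Q)

namespace CliffordAlgebra

variable {R M : Type*} [CommRing R] [AddCommGroup M] [Module R M] {Q : QuadraticForm R M}

theorem contractLeft_mul (d : Module.Dual R M) (x y : CliffordAlgebra Q) :
    contractLeft d (x * y) = contractLeft d x * y + involute x * contractLeft d y := by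
  induction x using CliffordAlgebra.induction generalizing y with
  | algebraMap r =>
    rw [contractLeft_algebraMap_mul, contractLeft_algebraMap, zero_mul, zero_add,
      AlgHom.commutes]
  | ι m =>
    rw [contractLeft_ι_mul, contractLeft_ι, involute_ι, Algebra.smul_def, neg_mul,
      sub_eq_add_neg]
  | add a b ha hb =>
    simp only [map_add, add_mul, ha, hb]
    abel
  | mul a b ha hb =>
    rw [mul_assoc, ha, hb, ha b, map_mul]
    simp only [mul_add, add_mul, mul_assoc]
    abel

theorem ι_mul_sub_involute_mul_ι (v : M) (x : CliffordAlgebra Q) :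
    ι Q v * x - involute x * ι Q v = contractLeft (Q.polarBilin v) x := by
  induction x using CliffordAlgebra.induction with
  | algebraMap r =>
    rw [contractLeft_algebraMap, AlgHom.commutes, Algebra.commutes, sub_self]
  | ι m =>
    rw [contractLeft_ι, involute_ι, neg_mul, sub_neg_eq_add, ι_mul_ι_add_swap,
      QuadraticMap.polarBilin_apply_apply]
  | add a b ha hb =>
    simp only [map_add, mul_add, add_mul, ← ha, ← hb]
    abel
  | mul a b ha hb =>
    rw [contractLeft_mul, ← ha, ← hb, map_mul]
    simp only [sub_mul, mul_sub, mul_assoc]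
    abel

theorem contractLeft_eq_zero_of_mem_adjoin {d : Module.Dual R M} {S : Set M}
    (hS : ∀ w ∈ S, d w = 0) {x : CliffordAlgebra Q}
    (hx : x ∈ Algebra.adjoin R (ι Q '' S)) : contractLeft d x = 0 := by
  induction hx using Algebra.adjoin_induction with
  | mem y hy =>
    obtain ⟨w, hw, rfl⟩ := hy
    rw [contractLeft_ι, hS w hw, map_zero]
  | algebraMap r => rw [contractLeft_algebraMap]
  | add a b _ _ ha hb => rw [map_add, ha, hb, add_zero]
  | mul a b _ _ ha hb => rw [contractLeft_mul, ha, hb, zero_mul, mul_zero, add_zero]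

theorem involute_mem_adjoin {S : Set M} {x : CliffordAlgebra Q}
    (hx : x ∈ Algebra.adjoin R (ι Q '' S)) : involute x ∈ Algebra.adjoin R (ι Q '' S) := by
  induction hx using Algebra.adjoin_induction with
  | mem y hy =>
    obtain ⟨w, hw, rfl⟩ := hy
    rw [involute_ι]
    exact neg_mem (Algebra.subset_adjoin ⟨w, hw, rfl⟩)
  | algebraMap r => rw [AlgHom.commutes]; exact algebraMap_mem _ r
  | add a b _ _ ha hb => rw [map_add]; exact add_mem ha hb
  | mul a b _ _ ha hb => rw [map_mul]; exact mul_mem ha hb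

theorem mul_ι_eq_ι_mul_involute_of_mem_adjoin {v : M} {S : Set M}
    (hS : ∀ w ∈ S, QuadraticMap.polar Q w v = 0) {x : CliffordAlgebra Q}
    (hx : x ∈ Algebra.adjoin R (ι Q '' S)) : x * ι Q v = ι Q v * involute x := by
  induction hx using Algebra.adjoin_induction with
  | mem y hy =>
    obtain ⟨w, hw, rfl⟩ := hy
    rw [ι_mul_ι_comm, hS w hw, map_zero, zero_sub, involute_ι, mul_neg]
  | algebraMap r => rw [Algebra.commutes, AlgHom.commutes]
  | add a b _ _ ha hb => rw [add_mul, ha, hb, map_add, mul_add]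
  | mul a b _ _ ha hb => rw [mul_assoc, hb, ← mul_assoc, ha, mul_assoc, map_mul]

/-- The elements `p + ι v * q` with `p, q ∈ adjoin (ι '' S)` are closed under multiplication
since `ι v` anticommutes with `ι '' S` and `ι v * ι v = Q v`. -/
theorem exists_eq_add_ι_mul_of_mem_adjoin_insert {v : M} {S : Set M}
    (hS : ∀ w ∈ S, QuadraticMap.polar Q w v = 0) {x : CliffordAlgebra Q}
    (hx : x ∈ Algebra.adjoin R (ι Q '' insert v S)) :
    ∃ p ∈ Algebra.adjoin R (ι Q '' S), ∃ q ∈ Algebra.adjoin R (ι Q '' S),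
      x = p + ι Q v * q := by
  induction hx using Algebra.adjoin_induction with
  | mem y hy =>
    obtain ⟨w, rfl | hw, rfl⟩ := hy
    · exact ⟨0, zero_mem _, 1, one_mem _, by rw [zero_add, mul_one]⟩
    · exact ⟨ι Q w, Algebra.subset_adjoin ⟨w, hw, rfl⟩, 0, zero_mem _, by
        rw [mul_zero, add_zero]⟩
  | algebraMap r =>
    exact ⟨algebraMap R _ r, algebraMap_mem _ r, 0, zero_mem _, by rw [mul_zero, add_zero]⟩
  | add a b _ _ ha hb =>
    obtain ⟨p, hp, q, hq, rfl⟩ := ha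
    obtain ⟨p', hp', q', hq', rfl⟩ := hb
    exact ⟨p + p', add_mem hp hp', q + q', add_mem hq hq', by rw [mul_add]; abel⟩
  | mul a b _ _ ha hb =>
    obtain ⟨p, hp, q, hq, rfl⟩ := ha
    obtain ⟨p', hp', q', hq', rfl⟩ := hb
    refine ⟨p * p' + Q v • (involute q * q'),
      add_mem (mul_mem hp hp') (Subalgebra.smul_mem _ (mul_mem (involute_mem_adjoin hq) hq') _),
      involute p * q' + q * p', add_mem (mul_mem (involute_mem_adjoin hp) hq') (mul_mem hq hp'),
      ?_⟩
    have hpv : p * (ι Q v * q') = ι Q v * (involute p * q') := by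
      rw [← mul_assoc, mul_ι_eq_ι_mul_involute_of_mem_adjoin hS hp, mul_assoc]
    have hqv : ι Q v * q * (ι Q v * q') = Q v • (involute q * q') := by
      rw [mul_assoc, ← mul_assoc q, mul_ι_eq_ι_mul_involute_of_mem_adjoin hS hq, ← mul_assoc,
        ← mul_assoc, ι_sq_scalar, mul_assoc, Algebra.smul_def]
    rw [add_mul, mul_add, mul_add, hpv, mul_assoc (ι Q v) q p', hqv, mul_add]
    abel

theorem mem_range_algebraMap_of_mem_adjoin_of_contractLeft_eq_zero {S : Set M} (hSf : S.Finite)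
    (hS : S.Pairwise fun v w => QuadraticMap.polar Q v w = 0)
    (hSu : ∀ v ∈ S, IsUnit (QuadraticMap.polar Q v v)) {x : CliffordAlgebra Q}
    (hx : x ∈ Algebra.adjoin R (ι Q '' S))
    (hxS : ∀ v ∈ S, contractLeft (Q.polarBilin v) x = 0) :
    x ∈ Set.range (algebraMap R (CliffordAlgebra Q)) := by
  induction S, hSf using Set.Finite.induction_on generalizing x with
  | empty =>
    rwa [Set.image_empty, Algebra.adjoin_empty, Algebra.mem_bot] at hx
  | @insert v S hvS _ ih =>
    obtain ⟨hS, hv_orth⟩ := (Set.pairwise_insert_of_notMem hvS).1 hS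
    obtain ⟨p, hp, q, hq, rfl⟩ :=
      exists_eq_add_ι_mul_of_mem_adjoin_insert (fun w hw => (hv_orth w hw).2) hx
    have hvp : contractLeft (Q.polarBilin v) p = 0 :=
      contractLeft_eq_zero_of_mem_adjoin (fun w hw => (hv_orth w hw).1) hp
    have hvq : contractLeft (Q.polarBilin v) q = 0 :=
      contractLeft_eq_zero_of_mem_adjoin (fun w hw => (hv_orth w hw).1) hq
    have hq0 : q = 0 := by
      have := hxS v (Set.mem_insert v S)
      rw [map_add, contractLeft_ι_mul, hvp, hvq, mul_zero, sub_zero, zero_add] at this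
      exact (hSu v (Set.mem_insert v S)).smul_eq_zero.1 this
    rw [hq0, mul_zero, add_zero] at hxS ⊢
    exact ih hS (fun w hw => hSu w (Set.mem_insert_of_mem v hw)) hp
      (fun w hw => hxS w (Set.mem_insert_of_mem v hw))

theorem adjoin_ι_image_eq_top {S : Set M} (hS : Submodule.span R S = ⊤) :
    Algebra.adjoin R (ι Q '' S) = ⊤ := by
  rw [eq_top_iff, ← adjoin_range_ι, Algebra.adjoin_le_iff]
  rintro _ ⟨v, rfl⟩
  have hv : ι Q v ∈ Submodule.span R (ι Q '' S) := by
    rw [← Submodule.map_span, hS]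
    exact Submodule.mem_map_of_mem Submodule.mem_top
  exact Algebra.span_le_adjoin R _ hv

section Field

variable {F V : Type*} [Field F] [AddCommGroup V] [Module F V] [FiniteDimensional F V]
  [Invertible (2 : F)] {Q : QuadraticForm F V}

theorem mem_range_algebraMap_of_forall_contractLeft_eq_zero (hQ : Q.polarBilin.Nondegenerate)
    {x : CliffordAlgebra Q} (hx : ∀ v, contractLeft (Q.polarBilin v) x = 0) :
    x ∈ Set.range (algebraMap F (CliffordAlgebra Q)) := by
  have hsymm : Q.polarBilin.IsSymm := ⟨QuadraticMap.polar_comm Q⟩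
  obtain ⟨e, he⟩ := LinearMap.BilinForm.exists_orthogonal_basis hsymm
  refine mem_range_algebraMap_of_mem_adjoin_of_contractLeft_eq_zero (Set.finite_range e) ?_ ?_
    ?_ fun v _ => hx v
  · rintro _ ⟨i, rfl⟩ _ ⟨j, rfl⟩ hij
    exact he (ne_of_apply_ne e hij)
  · rintro _ ⟨i, rfl⟩
    exact (LinearMap.BilinForm.iIsOrtho.not_isOrtho_basis_self_of_nondegenerate he hQ i).isUnit
  · rw [adjoin_ι_image_eq_top e.span_eq]
    trivial

theorem mem_range_algebraMap_of_mem_even_of_commute (hQ : Q.polarBilin.Nondegenerate)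
    {x : CliffordAlgebra Q} (hx : x ∈ even Q) (hxι : ∀ v, Commute x (ι Q v)) :
    x ∈ Set.range (algebraMap F (CliffordAlgebra Q)) :=
  mem_range_algebraMap_of_forall_contractLeft_eq_zero hQ fun v => by
    rw [← ι_mul_sub_involute_mul_ι, involute_eq_of_mem_even hx, (hxι v).eq, sub_self]

end Field

end CliffordAlgebra

theorem spin_central_eq_pm_one_general {F V : Type*} [Field F] [AddCommGroup V] [Module F V]
    [FiniteDimensional F V]
    (hF : ringChar F ≠ 2) (Q : QuadraticForm F V)
    (hQ : Q.polarBilin.Nondegenerate)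
    (u : CliffordAlgebra Q) (hu : MemSpin Q u)
    (hcomm : ∀ v : V, u * ι Q v * Ring.inverse u = ι Q v) :
    u = 1 ∨ u = -1 := by
  obtain ⟨hunit, heven, hrev, -⟩ := hu
  have : Invertible (2 : F) := invertibleOfNonzero (Ring.two_ne_zero hF)
  have hιu (v : V) : Commute u (ι Q v) := by
    calc u * ι Q v = u * ι Q v * Ring.inverse u * u :=
          (Ring.inverse_mul_cancel_right u _ hunit).symm
      _ = ι Q v * u := by rw [hcomm v]
  obtain ⟨c, rfl⟩ := mem_range_algebraMap_of_mem_even_of_commute hQ heven hιu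
  rw [reverse.commutes, ← map_mul, ← map_one (algebraMap F _)] at hrev
  rcases mul_self_eq_one_iff.mp ((algebraMap F (CliffordAlgebra Q)).injective hrev) with rfl | rfl
  · exact .inl (map_one _)
  · exact .inr (by rw [map_neg, map_one])

/-- If `u ∈ Spin(Q)` satisfies `u·ι(v)·u⁻¹ = ι(v)` for all `v ∈ V`, then `u = ±1`. -/
theorem spin_central_eq_pm_one {F V : Type*} [Field F] [AddCommGroup V] [Module F V]
    [Nontrivial V] [FiniteDimensional F V]
    (hF : ringChar F ≠ 2) (Q : QuadraticForm F V)
    (hQ : Q.polarBilin.Nondegenerate)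
    (u : CliffordAlgebra Q) (hu : MemSpin Q u)
    (hcomm : ∀ v : V, u * ι Q v * Ring.inverse u = ι Q v) :
    u = 1 ∨ u = -1 :=
  spin_central_eq_pm_one_general hF Q hQ u hu hcomm
end

section
/- Let v, w ∈ V with Q(v) ≠ 0 and Q(w) ≠ 0, and let s ∈ F with s ≠ 0 and s² = Q(v)·Q(w). Then the element u = s⁻¹·ι(v)·ι(w) belongs to Spin(Q), and u·ι(x)·u⁻¹ = ι(τ_v(τ_w(x))) for every x ∈ V, i.e., conjugation by u induces the product of the two reflections τ_v and τ_w on V. -/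
/-!
The reversal of `ι v * ι w` is `ι w * ι v`, so `u * ū = s⁻² Q(v) Q(w) = 1` and `ū = u⁻¹`.
The identity `ι v * ι x * ι v = -Q(v) • ι (τ_v x)` then shows that conjugation by `ι v * ι w`
is `Q(v) Q(w) • (τ_v ∘ τ_w)` on `ι(V)`, and the factor `s⁻²` cancels it. Since reflections are
involutions, `τ_v ∘ τ_w` is onto, so conjugation by `u` maps `ι(V)` onto itself.
-/

open CliffordAlgebra

/-- The symmetry (reflection) `τ_v` along a vector `v` with `Q(v) ≠ 0`:
`τ_v(x) = x - (polar Q(x,v)/Q(v)) • v`. -/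
def reflectionAlong {F V : Type*} [Field F] [AddCommGroup V] [Module F V]
    (Q : QuadraticForm F V) (v : V) : V → V :=
  fun x => x - (QuadraticMap.polar Q x v / Q v) • v

section CommRing

variable {R M : Type*} [CommRing R] [AddCommGroup M] [Module R M] (Q : QuadraticForm R M)

theorem ι_mul_ι_mul_reverse (v w : M) :
    ι Q v * ι Q w * reverse (ι Q v * ι Q w) = algebraMap R _ (Q v * Q w) := by
  rw [reverse.map_mul, reverse_ι, reverse_ι, mul_assoc, ← mul_assoc (ι Q w), ι_sq_scalar,
    ← mul_assoc, ← Algebra.commutes, mul_assoc, ι_sq_scalar, ← map_mul, mul_comm]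

theorem reverse_mul_ι_mul_ι (v w : M) :
    reverse (ι Q v * ι Q w) * (ι Q v * ι Q w) = algebraMap R _ (Q v * Q w) := by
  rw [reverse.map_mul, reverse_ι, reverse_ι, mul_assoc, ← mul_assoc (ι Q v), ι_sq_scalar,
    ← mul_assoc, ← Algebra.commutes, mul_assoc, ι_sq_scalar, ← map_mul]

end CommRing

theorem inv_smul_mul_inv_smul {F A : Type*} [Field F] [Ring A] [Algebra F A] {a b : A} {s : F}
    (hs : s ≠ 0) (hab : a * b = algebraMap F A (s ^ 2)) : (s⁻¹ • a) * (s⁻¹ • b) = 1 := by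
  rw [smul_mul_smul_comm, hab, Algebra.smul_def, ← map_mul, ← map_one (algebraMap F A)]
  congr 1
  field_simp

section Field

variable {F V : Type*} [Field F] [AddCommGroup V] [Module F V] (Q : QuadraticForm F V)

theorem polar_reflectionAlong_left {v : V} (hv : Q v ≠ 0) (x : V) :
    QuadraticMap.polar Q (reflectionAlong Q v x) v = -QuadraticMap.polar Q x v := by
  rw [reflectionAlong, QuadraticMap.polar_sub_left, QuadraticMap.polar_smul_left,
    QuadraticMap.polar_self, nsmul_eq_mul, smul_eq_mul]
  field_simp
  ring

theorem reflectionAlong_involutive {v : V} (hv : Q v ≠ 0) :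
    Function.Involutive (reflectionAlong Q v) := fun x => by
  rw [reflectionAlong, polar_reflectionAlong_left Q hv, neg_div, neg_smul, sub_neg_eq_add,
    reflectionAlong, sub_add_cancel]

theorem ι_mul_ι_mul_ι_eq_neg_smul_reflectionAlong {v : V} (hv : Q v ≠ 0) (x : V) :
    ι Q v * ι Q x * ι Q v = -(Q v • ι Q (reflectionAlong Q v x)) := by
  rw [ι_mul_ι_mul_ι, reflectionAlong, ← map_smul, ← map_neg, smul_sub, smul_smul,
    mul_div_cancel₀ _ hv, QuadraticMap.polar_comm, neg_sub]

theorem ι_mul_ι_conj_eq_smul_reflectionAlong {v w : V} (hv : Q v ≠ 0) (hw : Q w ≠ 0) (x : V) :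
    ι Q v * ι Q w * ι Q x * reverse (ι Q v * ι Q w) =
      (Q v * Q w) • ι Q (reflectionAlong Q v (reflectionAlong Q w x)) := by
  have hregroup : ι Q v * ι Q w * ι Q x * reverse (ι Q v * ι Q w) =
      ι Q v * (ι Q w * ι Q x * ι Q w) * ι Q v := by
    rw [reverse.map_mul, reverse_ι, reverse_ι]
    noncomm_ring
  rw [hregroup, ι_mul_ι_mul_ι_eq_neg_smul_reflectionAlong Q hw, mul_neg, neg_mul, mul_smul_comm,
    smul_mul_assoc, ι_mul_ι_mul_ι_eq_neg_smul_reflectionAlong Q hv, smul_neg, neg_neg,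
    smul_smul, mul_comm (Q w)]

end Field

theorem product_of_reflections_lifts_to_spin_general {F V : Type*} [Field F] [AddCommGroup V]
    [Module F V] (Q : QuadraticForm F V)
    (v w : V) (hv : Q v ≠ 0) (hw : Q w ≠ 0)
    (s : F) (hs : s ≠ 0) (hs2 : s ^ 2 = Q v * Q w) :
    MemSpin Q (s⁻¹ • (ι Q v * ι Q w)) ∧
      ∀ x : V,
        (s⁻¹ • (ι Q v * ι Q w)) * ι Q x * Ring.inverse (s⁻¹ • (ι Q v * ι Q w)) =
          ι Q (reflectionAlong Q v (reflectionAlong Q w x)) := by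
  set u := s⁻¹ • (ι Q v * ι Q w)
  have hrev : reverse u = s⁻¹ • reverse (ι Q v * ι Q w) := map_smul _ _ _
  have hright : u * reverse u = 1 :=
    hrev ▸ inv_smul_mul_inv_smul hs (hs2 ▸ ι_mul_ι_mul_reverse Q v w)
  have hleft : reverse u * u = 1 :=
    hrev ▸ inv_smul_mul_inv_smul hs (hs2 ▸ reverse_mul_ι_mul_ι Q v w)
  let U : (CliffordAlgebra Q)ˣ := ⟨u, reverse u, hright, hleft⟩
  have hinv : Ring.inverse u = reverse u := Ring.inverse_unit U
  have hconj (x : V) :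
      u * ι Q x * reverse u = ι Q (reflectionAlong Q v (reflectionAlong Q w x)) := by
    rw [hrev, smul_mul_assoc, smul_mul_assoc, mul_smul_comm, smul_smul, ← sq, inv_pow, hs2,
      ι_mul_ι_conj_eq_smul_reflectionAlong Q hv hw, inv_smul_smul₀ (mul_ne_zero hv hw)]
  refine ⟨⟨U.isUnit, Subalgebra.smul_mem _ (ι_mul_ι_mem_evenOdd_zero Q v w) _, hright, ?_⟩,
    fun x => by rw [hinv, hconj]⟩
  have hsurj : Function.Surjective (reflectionAlong Q v ∘ reflectionAlong Q w) :=
    (reflectionAlong_involutive Q hv).surjective.comp (reflectionAlong_involutive Q hw).surjective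
  rw [hinv, ← Set.range_comp]
  exact (congrArg Set.range (funext hconj)).trans (hsurj.range_comp _)

/-- For anisotropic `v, w` and `s ∈ F^×` with `s² = Q(v)·Q(w)`, the element
`u = s⁻¹·ι(v)·ι(w)` lies in `Spin(Q)` and conjugation by `u` induces the product of the
reflections `τ_v` and `τ_w` on `V`. -/
theorem product_of_reflections_lifts_to_spin {F V : Type*} [Field F] [AddCommGroup V]
    [Module F V] [Nontrivial V] [FiniteDimensional F V]
    (hF : ringChar F ≠ 2) (Q : QuadraticForm F V)
    (hQ : Q.polarBilin.Nondegenerate)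
    (v w : V) (hv : Q v ≠ 0) (hw : Q w ≠ 0)
    (s : F) (hs : s ≠ 0) (hs2 : s ^ 2 = Q v * Q w) :
    MemSpin Q (s⁻¹ • (ι Q v * ι Q w)) ∧
      ∀ x : V,
        (s⁻¹ • (ι Q v * ι Q w)) * ι Q x * Ring.inverse (s⁻¹ • (ι Q v * ι Q w)) =
          ι Q (reflectionAlong Q v (reflectionAlong Q w x)) :=
  product_of_reflections_lifts_to_spin_general Q v w hv hw s hs hs2
end

section
/- In the ring R = 𝔽_q[X,Y]/(P(X,Y) − Y), the square of the ideal I = (x,y) equals the principal ideal generated by y: I² = (y). -/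
/-!
Write `P = a X² + Y·L` with `L` linear. In `R` the relation `y = P(x, y)` shows `y ∈ I²` and
`a x² = y (1 - L(x, y)) ∈ (y)`. Irreducibility forces `a ≠ 0`: otherwise `Y ∣ P`, so `P` would be
associated to `Y`, which has degree `1`. Hence `I² = (x², xy, y²) = (y)`.
-/

open MvPolynomial

theorem Ideal.span_pair_sq_eq_span_singleton {S : Type*} [CommSemiring S] {x y : S}
    (hy : y ∈ Ideal.span {x, y} ^ 2) (hx : x ^ 2 ∈ Ideal.span {y}) :
    Ideal.span {x, y} ^ 2 = Ideal.span {y} := by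
  refine le_antisymm ?_ ((Ideal.span_singleton_le_iff_mem _).2 hy)
  rw [sq, Ideal.span_pair_mul_span_pair, Ideal.span_le]
  rintro r (rfl | rfl | rfl | rfl)
  · rwa [← sq]
  all_goals exact Ideal.mem_span_singleton.2 (by simp)

theorem Finsupp.eq_single_zero_of_degree_eq {d : Fin 2 →₀ ℕ} {n : ℕ} (hd : d.degree = n)
    (h1 : d 1 = 0) : d = Finsupp.single 0 n := by
  rw [Finsupp.degree_eq_sum, Fin.sum_univ_two, h1, add_zero] at hd
  ext i
  fin_cases i <;> simp [hd, h1]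

namespace MvPolynomial

theorem map_idealOfVars_fin_two {R S : Type*} [CommSemiring R] [CommSemiring S]
    (f : MvPolynomial (Fin 2) R →+* S) :
    (idealOfVars (Fin 2) R).map f = Ideal.span {f (X 0), f (X 1)} := by
  rw [Ideal.map_span, ← Set.range_comp]
  congr 1
  ext s
  simp [Fin.exists_fin_two, eq_comm]

namespace IsHomogeneous

variable {R : Type*} {n : ℕ}

theorem mem_pow_idealOfVars {σ : Type*} [CommSemiring R] {P : MvPolynomial σ R}
    (hP : P.IsHomogeneous n) : P ∈ idealOfVars σ R ^ n :=
  (mem_pow_idealOfVars_iff' n P).2 fun _ hd => hP.coeff_eq_zero hd.ne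

theorem X_one_dvd_sub_C_mul_X_zero_pow [CommRing R] {P : MvPolynomial (Fin 2) R}
    (hP : P.IsHomogeneous n) : X 1 ∣ P - C (coeff (Finsupp.single 0 n) P) * X 0 ^ n := by
  rw [C_mul_X_pow_eq_monomial, ← Ideal.mem_span_singleton, ← Set.image_singleton,
    mem_ideal_span_X_image]
  intro d hd
  refine ⟨1, rfl, fun h1 => ?_⟩
  rw [mem_support_iff, coeff_sub, coeff_monomial] at hd
  by_cases hs : Finsupp.single 0 n = d
  · subst hs
    simp at hd
  · rw [if_neg hs, sub_zero] at hd
    exact hs (Finsupp.eq_single_zero_of_degree_eq (of_not_not (mt hP.coeff_eq_zero hd)) h1).symm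

theorem coeff_single_zero_ne_zero_of_irreducible [CommRing R] [IsDomain R]
    {P : MvPolynomial (Fin 2) R} (hP : P.IsHomogeneous n) (hPirr : Irreducible P) (hn : n ≠ 1) :
    coeff (Finsupp.single 0 n) P ≠ 0 := by
  intro ha
  have hdvd := hP.X_one_dvd_sub_C_mul_X_zero_pow
  rw [ha, C_0, zero_mul, sub_zero] at hdvd
  obtain ⟨u, hu⟩ := X_prime.irreducible.associated_of_dvd hPirr hdvd
  obtain ⟨r, -, hr⟩ := isUnit_iff_eq_C_of_isReduced.1 u.isUnit
  have hP1 : P.IsHomogeneous (1 + 0) := by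
    rw [← hu, hr]
    exact (isHomogeneous_X R 1).mul (isHomogeneous_C _ r)
  exact hn (hP.inj_right hP1 hPirr.ne_zero)

end IsHomogeneous

end MvPolynomial

theorem ideal_sq_eq_span_y_general (F : Type*) [Field F]
    (P : MvPolynomial (Fin 2) F) (hP : P.IsHomogeneous 2) (hPirr : Irreducible P) :
    (Ideal.span {Ideal.Quotient.mk (Ideal.span {P - X 1}) (X 0),
        Ideal.Quotient.mk (Ideal.span {P - X 1}) (X 1)}) ^ 2 =
      Ideal.span {Ideal.Quotient.mk (Ideal.span {P - X 1}) (X 1)} := by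
  set mk := Ideal.Quotient.mk (Ideal.span {P - X 1})
  have hy : mk P = mk (X 1) := Ideal.Quotient.eq.2 (Ideal.mem_span_singleton_self _)
  apply Ideal.span_pair_sq_eq_span_singleton
  · have hPI := Ideal.mem_map_of_mem mk hP.mem_pow_idealOfVars
    rwa [Ideal.map_pow, map_idealOfVars_fin_two, hy] at hPI
  · set a := coeff (Finsupp.single 0 2) P
    obtain ⟨Q, hQ⟩ := hP.X_one_dvd_sub_C_mul_X_zero_pow
    have hax : mk (C a) * mk (X 0) ^ 2 = mk (X 1) * (1 - mk Q) := by
      have hQ' := congrArg mk hQ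
      simp only [map_sub, map_mul, map_pow, hy] at hQ'
      linear_combination -hQ'
    have hunit : IsUnit (mk (C a)) :=
      ((hP.coeff_single_zero_ne_zero_of_irreducible hPirr (by norm_num)).isUnit.map C).map mk
    exact (Ideal.unit_mul_mem_iff_mem _ hunit).1 (Ideal.mem_span_singleton.2 ⟨_, hax⟩)

/-- In `R = 𝔽_q[X,Y]/(P(X,Y) − Y)`, with `P` an irreducible quadratic form and `q` odd,
the square of the ideal `I = (x, y)` is the principal ideal `(y)`. -/
theorem ideal_sq_eq_span_y (F : Type*) [Field F] [Fintype F] (hF : Odd (Fintype.card F))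
    (P : MvPolynomial (Fin 2) F) (hP : P.IsHomogeneous 2) (hPirr : Irreducible P) :
    (Ideal.span {Ideal.Quotient.mk (Ideal.span {P - X 1}) (X 0),
        Ideal.Quotient.mk (Ideal.span {P - X 1}) (X 1)}) ^ 2 =
      Ideal.span {Ideal.Quotient.mk (Ideal.span {P - X 1}) (X 1)} :=
  ideal_sq_eq_span_y_general F P hP hPirr
end

section
/- In the ring R = 𝔽_q[X,Y]/(P(X,Y) − Y), the ideal I = (x,y) is not a principal ideal. -/
/-!
Parametrize the conic by the lines `y = t x`: this maps `R` into `F(t)`, with image in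
`F[t, Q⁻¹]` for `Q(t) = P(1, t)` and without poles at `t = ∞`. If `(x, y) = (g)`, write
`x = h g`, `y = k g`, `g = u x + w y`; then `k = t h` and `h (u + t w) = 1`. Regularity of `k`
at infinity gives `deg h ≤ -1` and that of `u + t w` gives `deg h ≥ -1`. But `h` is a unit of
`F[t, Q⁻¹]`, so up to a constant it is a power of `Q`, an irreducible quadratic since `P` is
irreducible; hence `deg h` is even.
-/

open MvPolynomial
open scoped Polynomial

section BinaryQuadraticForm

variable {R : Type*} [CommSemiring R]

noncomputable def binaryQuadraticForm (a b c : R) : MvPolynomial (Fin 2) R :=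
  C a * X 0 ^ 2 + C b * (X 0 * X 1) + C c * X 1 ^ 2

/-- `P(1, t)` for `P = binaryQuadraticForm a b c`. -/
noncomputable def binaryQuadraticForm.dehomogenize (a b c : R) : R[X] :=
  Polynomial.C c * Polynomial.X ^ 2 + Polynomial.C b * Polynomial.X + Polynomial.C a

theorem MvPolynomial.IsHomogeneous.exists_eq_binaryQuadraticForm
    {P : MvPolynomial (Fin 2) R} (hP : P.IsHomogeneous 2) :
    ∃ a b c : R, P = binaryQuadraticForm a b c := by
  have hP' : P ∈ Submodule.span R (Set.range (X : Fin 2 → MvPolynomial (Fin 2) R)) ^ 2 := by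
    rw [← homogeneousSubmodule_one_eq_span_X, homogeneousSubmodule_one_pow]
    exact hP
  rw [sq] at hP'
  refine Submodule.mul_induction_on hP' (fun m hm n hn ↦ ?_) ?_
  · obtain ⟨u, rfl⟩ := (Submodule.mem_span_range_iff_exists_fun R).1 hm
    obtain ⟨v, rfl⟩ := (Submodule.mem_span_range_iff_exists_fun R).1 hn
    refine ⟨u 0 * v 0, u 0 * v 1 + u 1 * v 0, u 1 * v 1, ?_⟩
    simp only [binaryQuadraticForm, Fin.sum_univ_two, smul_eq_C_mul, map_add, map_mul]
    ring
  · rintro _ _ ⟨a, b, c, rfl⟩ ⟨a', b', c', rfl⟩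
    exact ⟨a + a', b + b', c + c', by simp only [binaryQuadraticForm, map_add]; ring⟩

end BinaryQuadraticForm

theorem binaryQuadraticForm.irreducible_dehomogenize {F : Type*} [Field F] {a b c : F}
    (hP : Irreducible (binaryQuadraticForm a b c)) :
    c ≠ 0 ∧ Irreducible (dehomogenize a b c) := by
  have not_isUnit {p : MvPolynomial (Fin 2) F} (x : Fin 2 → F) (hx : eval x p = 0) :
      ¬IsUnit p := fun hu ↦ by simpa [hx] using hu.map (eval x)
  have hc : c ≠ 0 := by
    rintro rfl
    rcases hP.isUnit_or_isUnit (a := X 0) (b := C a * X 0 + C b * X 1)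
      (by simp only [binaryQuadraticForm, map_zero]; ring) with hu | hu
    · exact not_isUnit ![0, 0] (by simp) hu
    · exact not_isUnit ![b, -a] (by simp; ring) hu
  refine ⟨hc, Polynomial.irreducible_of_degree_le_three_of_not_isRoot
    (by rw [dehomogenize, Polynomial.natDegree_quadratic hc]; decide) fun r hr ↦ ?_⟩
  have hr : c * r ^ 2 + b * r + a = 0 := by simpa [dehomogenize] using hr
  have hCa : (C a : MvPolynomial (Fin 2) F) = -(C c * C r * C r) - C b * C r := by
    simp only [← map_mul, ← map_neg, ← map_sub]
    congr 1
    linear_combination hr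
  rcases hP.isUnit_or_isUnit (a := X 1 - C r * X 0) (b := C c * X 1 + C (c * r + b) * X 0)
    (by simp only [binaryQuadraticForm, hCa, map_add, map_mul]; ring) with hu | hu
  · exact not_isUnit ![1, r] (by simp) hu
  · exact not_isUnit ![c, -(c * r + b)] (by simp; ring) hu

namespace RatFunc

variable {F : Type*} [Field F]

/-- The subring `F[t, Q⁻¹]` of `F(t)`. -/
def awaySubring (Q : F[X]) : Subring (RatFunc F) where
  carrier := {s | ∃ (n : ℕ) (f : F[X]),
    s * algebraMap F[X] (RatFunc F) Q ^ n = algebraMap F[X] (RatFunc F) f}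
  mul_mem' := by
    rintro s s' ⟨n, f, hf⟩ ⟨n', f', hf'⟩
    exact ⟨n + n', f * f', by rw [pow_add, map_mul, ← hf, ← hf']; ring⟩
  one_mem' := ⟨0, 1, by simp⟩
  add_mem' := by
    rintro s s' ⟨n, f, hf⟩ ⟨n', f', hf'⟩
    refine ⟨n + n', f * Q ^ n' + f' * Q ^ n, ?_⟩
    rw [map_add, map_mul, map_mul, map_pow, map_pow, ← hf, ← hf']
    ring
  zero_mem' := ⟨0, 0, by simp⟩
  neg_mem' := by
    rintro s ⟨n, f, hf⟩
    exact ⟨n, -f, by rw [map_neg, ← hf, neg_mul]⟩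

theorem X_mem_awaySubring (Q : F[X]) : X ∈ awaySubring Q :=
  ⟨0, Polynomial.X, by simp [algebraMap_X]⟩

theorem natDegree_dvd_intDegree_of_mul_eq_one {Q : F[X]} (hQ : Prime Q) {s s' : RatFunc F}
    (hs : s ∈ awaySubring Q) (hs' : s' ∈ awaySubring Q) (h : s * s' = 1) :
    (Q.natDegree : ℤ) ∣ s.intDegree := by
  obtain ⟨n, f, hf⟩ := hs
  obtain ⟨n', f', hf'⟩ := hs'
  have hff' : f * f' = Q ^ (n + n') := IsFractionRing.injective F[X] (RatFunc F) <| by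
    rw [map_mul, ← hf, ← hf', map_pow, pow_add]
    linear_combination (algebraMap F[X] (RatFunc F) Q ^ n * algebraMap F[X] (RatFunc F) Q ^ n') * h
  obtain ⟨i, -, hi⟩ := (dvd_prime_pow hQ _).1 (Dvd.intro f' hff')
  have hs0 : s ≠ 0 := left_ne_zero_of_mul_eq_one h
  have hQ0 : algebraMap F[X] (RatFunc F) Q ≠ 0 := by simpa using hQ.ne_zero
  have hfi : f.natDegree = (Q ^ i).natDegree :=
    Polynomial.natDegree_eq_of_degree_eq (Polynomial.degree_eq_degree_of_associated hi)
  have hdeg := congrArg intDegree hf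
  rw [intDegree_mul hs0 (pow_ne_zero _ hQ0), ← map_pow, intDegree_polynomial,
    intDegree_polynomial, hfi, Polynomial.natDegree_pow, Polynomial.natDegree_pow] at hdeg
  exact ⟨i - n, by push_cast at hdeg; linear_combination hdeg⟩

variable [DecidableEq (RatFunc F)]

theorem algebraMap_div_mem {Q f : F[X]} {n : ℕ} (hQ : Q ≠ 0)
    (hf : f.natDegree ≤ n * Q.natDegree) :
    algebraMap F[X] (RatFunc F) f / algebraMap F[X] (RatFunc F) Q ^ n ∈
      awaySubring Q ⊓ (inftyValuation F).integer := by
  refine ⟨⟨n, f, div_mul_cancel₀ _ (pow_ne_zero n (by simpa using hQ))⟩, ?_⟩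
  rw [SetLike.mem_coe, Valuation.mem_integer_iff]
  rcases eq_or_ne f 0 with rfl | hf0
  · simp
  rw [map_div₀, map_pow, inftyValuation_apply, inftyValuation_apply,
    inftyValuation.polynomial _ hf0, inftyValuation.polynomial _ hQ, ← WithZero.exp_nsmul,
    ← WithZero.exp_sub, ← WithZero.exp_zero, WithZero.exp_le_exp, nsmul_eq_mul, sub_nonpos]
  exact_mod_cast hf

theorem intDegree_eq_neg_one_of_mul_eq_one {h u w : RatFunc F}
    (hh : X * h ∈ (inftyValuation F).integer) (hu : u ∈ (inftyValuation F).integer)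
    (hw : w ∈ (inftyValuation F).integer) (huw : h * (u + X * w) = 1) : h.intDegree = -1 := by
  set v := inftyValuation F
  have hX : v X = WithZero.exp 1 := inftyValuation.X F
  rw [Valuation.mem_integer_iff, map_mul, hX] at hh
  rw [Valuation.mem_integer_iff] at hu hw
  have hS : v (u + X * w) ≤ WithZero.exp 1 := by
    refine (v.map_add _ _).trans (max_le (hu.trans ?_) ?_)
    · rw [← WithZero.exp_zero, WithZero.exp_le_exp]
      exact zero_le_one
    · rw [map_mul, hX]
      exact mul_le_of_le_one_right' hw
  have hvh : v h * WithZero.exp 1 = 1 := by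
    refine le_antisymm (by rwa [mul_comm]) ?_
    calc 1 = v h * v (u + X * w) := by rw [← map_mul, huw, map_one]
      _ ≤ v h * WithZero.exp 1 := by gcongr
  replace hvh : v h = WithZero.exp (-1) := by
    rw [WithZero.exp_neg, eq_inv_of_mul_eq_one_left hvh]
  rw [inftyValuation_apply, inftyValuation_of_nonzero (hx := left_ne_zero_of_mul_eq_one huw)] at hvh
  exact WithZero.exp_injective hvh

end RatFunc

section Conic

variable {F : Type*} [Field F] (a b c : F)

open binaryQuadraticForm

theorem aeval_binaryQuadraticForm_sub_X_one :
    aeval ![RatFunc.X / algebraMap F[X] (RatFunc F) (dehomogenize a b c),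
      RatFunc.X ^ 2 / algebraMap F[X] (RatFunc F) (dehomogenize a b c)]
      (binaryQuadraticForm a b c - X 1) = 0 := by
  set q := algebraMap F[X] (RatFunc F) (dehomogenize a b c)
  have hq : q = RatFunc.C c * RatFunc.X ^ 2 + RatFunc.C b * RatFunc.X + RatFunc.C a := by
    simp [q, dehomogenize, RatFunc.algebraMap_X, RatFunc.algebraMap_C]
  rcases eq_or_ne q 0 with hq0 | hq0
  · simp [binaryQuadraticForm, hq0]
  · simp only [binaryQuadraticForm, map_sub, map_add, map_mul, map_pow, aeval_C, aeval_X,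
      RatFunc.algebraMap_eq_C, Matrix.cons_val_zero, Matrix.cons_val_one]
    field_simp
    rw [hq]
    ring

/-- Lines `y = t x` through the origin meet the conic `y = P(x, y)` again at
`(t / Q(t), t² / Q(t))`, where `Q(t) = P(1, t)`. -/
noncomputable def conicParametrization :
    MvPolynomial (Fin 2) F ⧸ Ideal.span {binaryQuadraticForm a b c - X 1} →+* RatFunc F :=
  Ideal.Quotient.lift _ (aeval ![RatFunc.X / algebraMap F[X] (RatFunc F) (dehomogenize a b c),
      RatFunc.X ^ 2 / algebraMap F[X] (RatFunc F) (dehomogenize a b c)]).toRingHom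
    fun p hp ↦ by
      obtain ⟨r, rfl⟩ := Ideal.mem_span_singleton'.1 hp
      simp [aeval_binaryQuadraticForm_sub_X_one]

theorem conicParametrization_mk_X_zero :
    conicParametrization a b c (Ideal.Quotient.mk _ (X 0)) =
      RatFunc.X / algebraMap F[X] (RatFunc F) (dehomogenize a b c) := by
  simp [conicParametrization]

theorem conicParametrization_mk_X_one :
    conicParametrization a b c (Ideal.Quotient.mk _ (X 1)) =
      RatFunc.X * conicParametrization a b c (Ideal.Quotient.mk _ (X 0)) := by
  simp [conicParametrization, sq, mul_div_assoc]

theorem conicParametrization_mem [DecidableEq (RatFunc F)] (hc : c ≠ 0)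
    (z : MvPolynomial (Fin 2) F ⧸ Ideal.span {binaryQuadraticForm a b c - X 1}) :
    conicParametrization a b c z ∈
      RatFunc.awaySubring (dehomogenize a b c) ⊓ (RatFunc.inftyValuation F).integer := by
  have hdeg : (dehomogenize a b c).natDegree = 2 := Polynomial.natDegree_quadratic hc
  have hQ : dehomogenize a b c ≠ 0 := Polynomial.ne_zero_of_natDegree_gt (n := 0) (by omega)
  obtain ⟨p, rfl⟩ := Ideal.Quotient.mk_surjective z
  refine eval₂_mem (fun d _ ↦ ?_) fun i ↦ ?_
  · simpa [RatFunc.algebraMap_eq_C, RatFunc.algebraMap_C] using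
      RatFunc.algebraMap_div_mem (n := 0) (f := Polynomial.C (p.coeff d)) hQ (by simp)
  · fin_cases i
    · simpa [RatFunc.algebraMap_X] using
        RatFunc.algebraMap_div_mem (n := 1) (f := Polynomial.X) hQ (by simp [hdeg])
    · have := RatFunc.algebraMap_div_mem (n := 1) (f := Polynomial.X ^ 2) hQ (by simp [hdeg])
      rwa [map_pow, RatFunc.algebraMap_X, pow_one] at this

end Conic

theorem ideal_xy_not_principal_general (F : Type*) [Field F]
    (P : MvPolynomial (Fin 2) F) (hP : P.IsHomogeneous 2) (hPirr : Irreducible P) :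
    ¬ Submodule.IsPrincipal
        (Ideal.span {Ideal.Quotient.mk (Ideal.span {P - X 1}) (X 0),
          Ideal.Quotient.mk (Ideal.span {P - X 1}) (X 1)}) := by
  classical
  obtain ⟨a, b, c, rfl⟩ := hP.exists_eq_binaryQuadraticForm
  obtain ⟨hc, hQ⟩ := binaryQuadraticForm.irreducible_dehomogenize hPirr
  set φ := conicParametrization a b c
  have mem := conicParametrization_mem a b c hc
  set mk := Ideal.Quotient.mk (Ideal.span {binaryQuadraticForm a b c - X 1})
  rintro ⟨g, hg⟩
  rw [Ideal.submodule_span_eq] at hg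
  obtain ⟨h, hh⟩ := Ideal.mem_span_singleton'.1 (hg ▸ Ideal.subset_span (by simp) :
    mk (X 0) ∈ Ideal.span {g})
  obtain ⟨k, hk⟩ := Ideal.mem_span_singleton'.1 (hg ▸ Ideal.subset_span (by simp) :
    mk (X 1) ∈ Ideal.span {g})
  obtain ⟨u, w, huw⟩ := Ideal.mem_span_pair.1 (hg ▸ Ideal.mem_span_singleton_self g)
  have hx0 : φ (mk (X 0)) ≠ 0 := by
    rw [conicParametrization_mk_X_zero]
    exact div_ne_zero RatFunc.X_ne_zero (by simpa using hQ.ne_zero)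
  have hg0 : φ g ≠ 0 := right_ne_zero_of_mul (by rw [← map_mul, hh]; exact hx0)
  have hkh : φ k = RatFunc.X * φ h := mul_right_cancel₀ hg0 <| by
    rw [← map_mul, hk, conicParametrization_mk_X_one, ← hh, map_mul, mul_assoc]
  have hunit : φ h * (φ u + RatFunc.X * φ w) = 1 := mul_right_cancel₀ hx0 <| by
    calc φ h * (φ u + RatFunc.X * φ w) * φ (mk (X 0))
      _ = φ h * φ (u * mk (X 0) + w * mk (X 1)) := by
        rw [map_add, map_mul, map_mul, conicParametrization_mk_X_one]; ring
      _ = 1 * φ (mk (X 0)) := by rw [huw, ← map_mul, hh, one_mul]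
  have hdeg : (φ h).intDegree = -1 :=
    RatFunc.intDegree_eq_neg_one_of_mul_eq_one (hkh ▸ (mem k).2) (mem u).2 (mem w).2 hunit
  have hdvd := RatFunc.natDegree_dvd_intDegree_of_mul_eq_one hQ.prime (mem h).1
    (add_mem (mem u).1 (mul_mem (RatFunc.X_mem_awaySubring _) (mem w).1)) hunit
  rw [hdeg, binaryQuadraticForm.dehomogenize, Polynomial.natDegree_quadratic hc] at hdvd
  omega

/-- In `R = 𝔽_q[X,Y]/(P(X,Y) − Y)`, with `P` an irreducible quadratic form and `q` odd,
the ideal `I = (x, y)` is not principal. -/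
theorem ideal_xy_not_principal (F : Type*) [Field F] [Fintype F] (hF : Odd (Fintype.card F))
    (P : MvPolynomial (Fin 2) F) (hP : P.IsHomogeneous 2) (hPirr : Irreducible P) :
    ¬ Submodule.IsPrincipal
        (Ideal.span {Ideal.Quotient.mk (Ideal.span {P - X 1}) (X 0),
          Ideal.Quotient.mk (Ideal.span {P - X 1}) (X 1)}) :=
  ideal_xy_not_principal_general F P hP hPirr
end

section
/- In the ring R = 𝔽_q[X,Y]/(Y² − X³ + X), the square of the ideal I = (x,y) equals the principal ideal generated by x: I² = (x). (This is the affine expression of the divisor identity div(x) = 2(P₀ − P∞) on the projective curve y²z − x(x² − z²) = 0, where P₀ is the origin.) -/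
open MvPolynomial

namespace Ideal

variable {R : Type*} [CommRing R]

theorem span_pair_sq_eq_span_singleton_s9 {a b : R} (h : a ^ 2 ∣ a + b ^ 2) :
    span {a, b} ^ 2 = span {a} := by
  obtain ⟨c, hc⟩ := h
  have hdvd : a ∣ b ^ 2 := ⟨a * c - 1, by linear_combination hc⟩
  apply le_antisymm
  · rw [sq, span_pair_mul_span_pair, span_le]
    simp only [Set.insert_subset_iff, Set.singleton_subset_iff, SetLike.mem_coe,
      mem_span_singleton]
    exact ⟨dvd_mul_right a a, dvd_mul_right a b, dvd_mul_left a b, by rwa [sq] at hdvd⟩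
  · have ha : a ^ 2 ∈ span {a, b} ^ 2 := pow_mem_pow (subset_span (by simp)) 2
    have hb : b ^ 2 ∈ span {a, b} ^ 2 := pow_mem_pow (subset_span (by simp)) 2
    rw [span_singleton_le_iff_mem]
    convert sub_mem (mul_mem_right c _ ha) hb using 1
    linear_combination hc

end Ideal

theorem ideal_sq_eq_span_x_general (F : Type*) [Field F] :
    (Ideal.span {Ideal.Quotient.mk (Ideal.span {(X 1 ^ 2 - X 0 ^ 3 + X 0 : MvPolynomial (Fin 2) F)}) (X 0),
        Ideal.Quotient.mk (Ideal.span {(X 1 ^ 2 - X 0 ^ 3 + X 0 : MvPolynomial (Fin 2) F)}) (X 1)}) ^ 2 =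
      Ideal.span {Ideal.Quotient.mk (Ideal.span {(X 1 ^ 2 - X 0 ^ 3 + X 0 : MvPolynomial (Fin 2) F)}) (X 0)} := by
  apply Ideal.span_pair_sq_eq_span_singleton_s9
  -- on the curve `x + y² = x³ = x² · x`
  refine ⟨Ideal.Quotient.mk _ (X 0), ?_⟩
  rw [← map_pow, ← map_pow, ← map_add, ← map_mul, Ideal.Quotient.eq, Ideal.mem_span_singleton]
  exact ⟨1, by ring⟩

/-- In `R = 𝔽_q[X,Y]/(Y² − X³ + X)` with `q` odd, the square of the ideal `I = (x, y)`
is the principal ideal `(x)`. -/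
theorem ideal_sq_eq_span_x (F : Type*) [Field F] [Fintype F] (hF : Odd (Fintype.card F)) :
    (Ideal.span {Ideal.Quotient.mk (Ideal.span {(X 1 ^ 2 - X 0 ^ 3 + X 0 : MvPolynomial (Fin 2) F)}) (X 0),
        Ideal.Quotient.mk (Ideal.span {(X 1 ^ 2 - X 0 ^ 3 + X 0 : MvPolynomial (Fin 2) F)}) (X 1)}) ^ 2 =
      Ideal.span {Ideal.Quotient.mk (Ideal.span {(X 1 ^ 2 - X 0 ^ 3 + X 0 : MvPolynomial (Fin 2) F)}) (X 0)} :=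
  ideal_sq_eq_span_x_general F
end

section
/- The ideal class group of R = 𝔽_q[X,Y]/(Y² − X³ + X) contains an element c with c ≠ 1 and c² = 1, i.e., an element of order 2; in particular, being finite, it has even order. -/
/-!
On `y² = x³ - x` the ideal `I = (x, y)` satisfies `I² = (x)`, since `x = x·x² - y²`, so the class
of `I` is killed by 2. It is not trivial: if `I = (f)` then `x = f²u` with `u` a unit. Mapping the
coordinate ring to `F[x][ω]`, `ω² = x³ - x`, and taking norms gives `x² = N(f)² N(u)` with `N(u)` a
nonzero constant, so `N(f) = a² - (x³ - x) b²` would have degree 1. But its two terms have degrees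
of different parity, so its degree is either even or at least 3.
-/

section QuadraticAlgebra

open Polynomial QuadraticAlgebra

variable {K : Type*} [CommRing K] [IsDomain K] {d : K[X]}

theorem QuadraticAlgebra.natDegree_norm_ne_one (hd : Odd d.natDegree) (hd1 : 1 < d.natDegree)
    (z : QuadraticAlgebra K[X] d 0) : z.norm.natDegree ≠ 1 := by
  have hnorm : z.norm = z.re ^ 2 - d * z.im ^ 2 := by rw [norm_def]; ring
  rw [hnorm]
  by_cases h0 : z.im = 0
  · simp [h0, natDegree_pow]
  have hre : (z.re ^ 2).natDegree = 2 * z.re.natDegree := natDegree_pow _ _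
  have him : (d * z.im ^ 2).natDegree = d.natDegree + 2 * z.im.natDegree := by
    rw [natDegree_mul (by rintro rfl; simp at hd) (pow_ne_zero 2 h0), natDegree_pow]
  have hne : (z.re ^ 2).natDegree ≠ (d * z.im ^ 2).natDegree := by
    rw [hre, him]
    intro h
    exact Nat.not_even_iff_odd.2 (hd.add_even (even_two_mul _)) (h ▸ even_two_mul _)
  rcases hne.lt_or_gt with h | h
  · rw [natDegree_sub_eq_right_of_natDegree_lt h]; omega
  · rw [natDegree_sub_eq_left_of_natDegree_lt h]; omega

theorem QuadraticAlgebra.not_associated_sq_algebraMap (hd : Odd d.natDegree)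
    (hd1 : 1 < d.natDegree) {p : K[X]} (hp : p.natDegree = 1) (z : QuadraticAlgebra K[X] d 0) :
    ¬ Associated (z ^ 2) (algebraMap K[X] _ p) := by
  intro h
  have hdeg := natDegree_eq_of_degree_eq (degree_eq_degree_of_associated (h.map norm))
  rw [map_pow, norm_algebraMap, natDegree_pow, natDegree_pow, hp] at hdeg
  exact natDegree_norm_ne_one hd hd1 z (by omega)

end QuadraticAlgebra

theorem Ideal.span_pair_sq_eq_span_singleton_of_sq_eq_cube_sub_self {R : Type*} [CommRing R]
    {x y : R} (h : y ^ 2 = x ^ 3 - x) : Ideal.span {x, y} ^ 2 = Ideal.span {x} := by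
  rw [sq, Ideal.span_pair_mul_span_pair]
  apply le_antisymm
  · simp only [Ideal.span_le, Set.insert_subset_iff, Set.singleton_subset_iff, SetLike.mem_coe,
      Ideal.mem_span_singleton]
    exact ⟨dvd_mul_right _ _, dvd_mul_right _ _, dvd_mul_left _ _,
      ⟨x ^ 2 - 1, by linear_combination h⟩⟩
  · rw [Ideal.span_singleton_le_iff_mem]
    have hx : x = x * (x * x) - y * y := by linear_combination h
    have hmem : x * (x * x) - y * y ∈ Ideal.span {x * x, x * y, y * x, y * y} :=
      sub_mem (Ideal.mul_mem_left _ x (Ideal.subset_span (by simp)))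
        (Ideal.subset_span (by simp))
    rwa [← hx] at hmem

open scoped nonZeroDivisors in
theorem ClassGroup.exists_ne_one_sq_eq_one {R : Type*} [CommRing R] [IsDedekindDomain R]
    {I : Ideal R} {x : R} (hI : I ^ 2 = Ideal.span {x})
    (hx : ∀ f : R, ¬ Associated (f ^ 2) x) :
    ∃ c : ClassGroup R, c ≠ 1 ∧ c ^ 2 = 1 := by
  have hx0 : x ≠ 0 := by rintro rfl; exact hx 0 (by simp)
  have hI0 : I ∈ (Ideal R)⁰ := mem_nonZeroDivisors_of_ne_zero (by
    rintro rfl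
    exact hx0 (Ideal.span_singleton_eq_bot.1 (by simpa using hI.symm)))
  refine ⟨ClassGroup.mk0 ⟨I, hI0⟩, fun h => ?_, ?_⟩
  · obtain ⟨f, hf⟩ := (ClassGroup.mk0_eq_one_iff hI0).1 h
    rw [hf, Ideal.submodule_span_eq, Ideal.span_singleton_pow] at hI
    exact hx f (Ideal.span_singleton_eq_span_singleton.1 hI)
  · rw [← map_pow, ClassGroup.mk0_eq_one_iff]
    simp only [SubmonoidClass.mk_pow, hI]
    exact ⟨x, rfl⟩

theorem even_natCard_of_sq_eq_one {G : Type*} [Group G] {c : G} (hc : c ≠ 1) (hc2 : c ^ 2 = 1) :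
    Even (Nat.card G) :=
  even_iff_two_dvd.2 (orderOf_eq_prime hc2 hc ▸ orderOf_dvd_natCard c)

section EllipticCurve

variable (F : Type*) [CommRing F]

noncomputable abbrev curveIdeal : Ideal (MvPolynomial (Fin 2) F) :=
  Ideal.span {MvPolynomial.X 1 ^ 2 - MvPolynomial.X 0 ^ 3 + MvPolynomial.X 0}

open Polynomial QuadraticAlgebra in
noncomputable def curveToQuadraticAlgebra :
    MvPolynomial (Fin 2) F ⧸ curveIdeal F →+* QuadraticAlgebra F[X] (X ^ 3 - X) 0 :=
  Ideal.Quotient.lift _ (MvPolynomial.eval₂Hom (algebraMap F _) ![algebraMap F[X] _ X, ω]) (by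
    have hω : (ω : QuadraticAlgebra F[X] (X ^ 3 - X) 0) ^ 2 =
        algebraMap F[X] _ X ^ 3 - algebraMap F[X] _ X := by
      simp [sq, omega_mul_omega_eq_algebraMap]
    intro a ha
    obtain ⟨c, rfl⟩ := Ideal.mem_span_singleton'.1 ha
    simp [hω])

open Polynomial in
theorem curveToQuadraticAlgebra_mk_X_zero :
    curveToQuadraticAlgebra F (Ideal.Quotient.mk _ (MvPolynomial.X 0)) = algebraMap F[X] _ X := by
  simp [curveToQuadraticAlgebra]

open MvPolynomial

theorem curve_mk_X_one_sq :
    Ideal.Quotient.mk (curveIdeal F) (X 1) ^ 2 =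
      Ideal.Quotient.mk (curveIdeal F) (X 0) ^ 3 - Ideal.Quotient.mk (curveIdeal F) (X 0) := by
  simp only [← map_pow, ← map_sub, Ideal.Quotient.eq]
  exact Ideal.mem_span_singleton.2 ⟨1, by ring⟩

theorem not_associated_sq_mk_X_zero [IsDomain F] (f : MvPolynomial (Fin 2) F ⧸ curveIdeal F) :
    ¬ Associated (f ^ 2) (Ideal.Quotient.mk (curveIdeal F) (X 0)) := by
  intro h
  have hdeg : (Polynomial.X ^ 3 - Polynomial.X : Polynomial F).natDegree = 3 := by
    rw [Polynomial.natDegree_sub_eq_left_of_natDegree_lt] <;> simp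
  refine QuadraticAlgebra.not_associated_sq_algebraMap (by rw [hdeg]; decide) (by rw [hdeg]; decide)
    Polynomial.natDegree_X (curveToQuadraticAlgebra F f) ?_
  simpa [curveToQuadraticAlgebra_mk_X_zero] using h.map (curveToQuadraticAlgebra F)

end EllipticCurve

open MvPolynomial

theorem classGroup_has_order_two_element_elliptic_general (F : Type*) [Field F]
    [IsDedekindDomain (MvPolynomial (Fin 2) F ⧸ Ideal.span {(X 1 ^ 2 - X 0 ^ 3 + X 0 : MvPolynomial (Fin 2) F)})] :
    (∃ c : ClassGroup (MvPolynomial (Fin 2) F ⧸ Ideal.span {(X 1 ^ 2 - X 0 ^ 3 + X 0 : MvPolynomial (Fin 2) F)}),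
        c ≠ 1 ∧ c ^ 2 = 1) ∧
      Even (Nat.card (ClassGroup (MvPolynomial (Fin 2) F ⧸ Ideal.span {(X 1 ^ 2 - X 0 ^ 3 + X 0 : MvPolynomial (Fin 2) F)}))) := by
  obtain ⟨c, hc, hc2⟩ := ClassGroup.exists_ne_one_sq_eq_one
    (Ideal.span_pair_sq_eq_span_singleton_of_sq_eq_cube_sub_self (curve_mk_X_one_sq F))
    (not_associated_sq_mk_X_zero F)
  exact ⟨⟨c, hc, hc2⟩, even_natCard_of_sq_eq_one hc hc2⟩

/-- The class group of `R = 𝔽_q[X,Y]/(Y² − X³ + X)` with `q` odd contains an element of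
order 2; in particular it has even order. -/
theorem classGroup_has_order_two_element_elliptic (F : Type*) [Field F] [Fintype F]
    (hF : Odd (Fintype.card F))
    [IsDomain (MvPolynomial (Fin 2) F ⧸ Ideal.span {(X 1 ^ 2 - X 0 ^ 3 + X 0 : MvPolynomial (Fin 2) F)})]
    [IsDedekindDomain (MvPolynomial (Fin 2) F ⧸ Ideal.span {(X 1 ^ 2 - X 0 ^ 3 + X 0 : MvPolynomial (Fin 2) F)})] :
    (∃ c : ClassGroup (MvPolynomial (Fin 2) F ⧸ Ideal.span {(X 1 ^ 2 - X 0 ^ 3 + X 0 : MvPolynomial (Fin 2) F)}),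
        c ≠ 1 ∧ c ^ 2 = 1) ∧
      Even (Nat.card (ClassGroup (MvPolynomial (Fin 2) F ⧸ Ideal.span {(X 1 ^ 2 - X 0 ^ 3 + X 0 : MvPolynomial (Fin 2) F)}))) :=
  classGroup_has_order_two_element_elliptic_general F
end

section
/- If 1 ≤ r < n, then there exists no K-algebra homomorphism from L to the matrix algebra M_r(K). -/
open Module

/-- By the tower law `[V : K] = [L : K] [V : L]`, `[L : K]` divides the positive `[V : K]`. -/
theorem Module.finrank_le_finrank_of_isScalarTower (K L V : Type*) [Field K] [DivisionRing L]
    [Algebra K L] [AddCommGroup V] [Module K V] [Module L V] [IsScalarTower K L V]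
    [FiniteDimensional K V] [Nontrivial V] : finrank K L ≤ finrank K V :=
  Nat.le_of_dvd finrank_pos (finrank_dvd_finrank_right K L V)

theorem Module.finrank_le_finrank_of_algHom_end {K L V : Type*} [Field K] [DivisionRing L]
    [Algebra K L] [AddCommGroup V] [Module K V] [FiniteDimensional K V] [Nontrivial V]
    (g : L →ₐ[K] Module.End K V) : finrank K L ≤ finrank K V := by
  let : Module L V := Module.compHom V g.toRingHom
  have : IsScalarTower K L V := IsScalarTower.of_algebraMap_smul fun k v => by
    change g (algebraMap K L k) v = k • v
    rw [AlgHom.commutes, Module.algebraMap_end_apply]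
  exact finrank_le_finrank_of_isScalarTower K L V

theorem Module.finrank_le_card_of_algHom_matrix {K L ι : Type*} [Field K] [DivisionRing L]
    [Algebra K L] [Fintype ι] [DecidableEq ι] [Nonempty ι] (f : L →ₐ[K] Matrix ι ι K) :
    finrank K L ≤ Fintype.card ι := by
  simpa using finrank_le_finrank_of_algHom_end (Matrix.toLinAlgEquiv'.toAlgHom.comp f)

theorem no_algHom_to_small_matrix_general (K L : Type*) [Field K] [Field L] [Algebra K L]
    (n r : ℕ) (hn : Module.finrank K L = n)
    (hr : 1 ≤ r) (hrn : r < n) :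
    IsEmpty (L →ₐ[K] Matrix (Fin r) (Fin r) K) := by
  have : NeZero r := ⟨by omega⟩
  refine ⟨fun f => ?_⟩
  have := finrank_le_card_of_algHom_matrix f
  rw [hn, Fintype.card_fin] at this
  omega

/-- If `L/K` is a field extension of finite degree `n` and `1 ≤ r < n`, then there is no
`K`-algebra homomorphism from `L` to the matrix algebra `M_r(K)`. -/
theorem no_algHom_to_small_matrix (K L : Type*) [Field K] [Field L] [Algebra K L]
    [FiniteDimensional K L] (n r : ℕ) (hn : Module.finrank K L = n)
    (hr : 1 ≤ r) (hrn : r < n) :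
    IsEmpty (L →ₐ[K] Matrix (Fin r) (Fin r) K) :=
  no_algHom_to_small_matrix_general K L n r hn hr hrn
end

section
/- If x ∈ K^× is an n-th power in E^×, i.e., there exists y ∈ E^× with yⁿ equal to the image of x in E, then x ∈ A^×·(K^×)ⁿ, i.e., x = u·cⁿ for some unit u of A and some c ∈ K^×. -/
/-! Every nonzero element of the fraction field of a DVR is uniquely `u • ϖ ^ k` with `u` a unit
and `k : ℤ`. Write `x = u • π ^ k` in `K` and `y = v • π ^ j` in `E`; since `π` stays a
uniformizer of `B`, comparing exponents in `yⁿ = x` inside `E` gives `k = n * j`, so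
`x = u • (π ^ j) ^ n`. -/

namespace IsDiscreteValuationRing

variable {R : Type*} [CommRing R] [IsDomain R] [IsDiscreteValuationRing R]
  {K : Type*} [Field K] [Algebra R K] [IsFractionRing R K] {ϖ : R}

theorem eq_zero_of_units_smul_zpow_eq_one (hϖ : Irreducible ϖ) (u : Rˣ) {m : ℤ}
    (h : u • algebraMap R K ϖ ^ m = 1) : m = 0 := by
  have hinj := IsFractionRing.injective R K
  rw [Units.smul_def, Algebra.smul_def] at h
  cases m with
  | ofNat k =>
    have hR : (u : R) * ϖ ^ k = (1 : Rˣ) * ϖ ^ 0 := hinj (by simpa using h)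
    exact congrArg Int.ofNat (unit_mul_pow_congr_pow hϖ hϖ u 1 k 0 hR)
  | negSucc k =>
    have hϖK : algebraMap R K ϖ ≠ 0 := by simpa using hϖ.ne_zero
    have hR : (u : R) * ϖ ^ 0 = (1 : Rˣ) * ϖ ^ (k + 1) := by
      apply hinj
      rw [zpow_negSucc, ← div_eq_mul_inv, div_eq_one_iff_eq (pow_ne_zero _ hϖK)] at h
      simpa using h
    exact absurd (unit_mul_pow_congr_pow hϖ hϖ u 1 0 (k + 1) hR) (by omega)

theorem units_smul_zpow_congr_zpow (hϖ : Irreducible ϖ) (u v : Rˣ) {m n : ℤ}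
    (h : u • algebraMap R K ϖ ^ m = v • algebraMap R K ϖ ^ n) : m = n := by
  have hϖK : algebraMap R K ϖ ≠ 0 := by simpa using hϖ.ne_zero
  rw [← sub_eq_zero]
  refine eq_zero_of_units_smul_zpow_eq_one hϖ (v⁻¹ * u) (K := K) ?_
  rw [zpow_sub₀ hϖK, mul_smul, ← smul_div_assoc, h, smul_div_assoc,
    div_self (zpow_ne_zero _ hϖK), smul_smul, inv_mul_cancel, one_smul]

end IsDiscreteValuationRing

theorem algebraMap_units_smul_zpow {A B K E : Type*} [CommRing A] [CommRing B] [Field K] [Field E]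
    [Algebra A B] [Algebra A K] [Algebra B E] [Algebra K E] [Algebra A E]
    [IsScalarTower A K E] [IsScalarTower A B E] (u : Aˣ) (a : A) (k : ℤ) :
    algebraMap K E (u • algebraMap A K a ^ k) =
      Units.map (algebraMap A B : A →* B) u • algebraMap B E (algebraMap A B a) ^ k := by
  simp only [Units.smul_def, Algebra.smul_def, map_mul, map_zpow₀, Units.coe_map,
    MonoidHom.coe_coe, ← IsScalarTower.algebraMap_apply]

theorem nth_power_descends_unramified_general (A B K E : Type*)
    [CommRing A] [IsDomain A] [IsDiscreteValuationRing A]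
    [CommRing B] [IsDomain B] [IsDiscreteValuationRing B]
    [Algebra A B]
    [Field K] [Algebra A K] [IsFractionRing A K]
    [Field E] [Algebra B E] [IsFractionRing B E]
    [Algebra K E] [Algebra A E] [IsScalarTower A K E] [IsScalarTower A B E]
    (hunram : ∃ π : A, Irreducible π ∧ Irreducible (algebraMap A B π))
    (n : ℕ) (x : K) (hx : x ≠ 0)
    (hpow : ∃ y : E, y ≠ 0 ∧ y ^ n = algebraMap K E x) :
    ∃ (u : Aˣ) (c : K), c ≠ 0 ∧ x = algebraMap A K u * c ^ n := by
  obtain ⟨π, hπ, hπB⟩ := hunram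
  obtain ⟨y, hy0, hy⟩ := hpow
  obtain ⟨k, u, rfl⟩ :=
    IsDiscreteValuationRing.exists_units_eq_smul_zpow_of_irreducible hπ hx
  obtain ⟨j, v, rfl⟩ :=
    IsDiscreteValuationRing.exists_units_eq_smul_zpow_of_irreducible hπB hy0
  have hk : n * j = k := by
    refine IsDiscreteValuationRing.units_smul_zpow_congr_zpow hπB (v ^ n)
      (Units.map (algebraMap A B : A →* B) u) (K := E) ?_
    rw [← algebraMap_units_smul_zpow (B := B) (K := K), ← hy, smul_pow, mul_comm, zpow_mul,
      zpow_natCast]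
  have hπK : algebraMap A K π ≠ 0 := by simpa using hπ.ne_zero
  refine ⟨u, algebraMap A K π ^ j, zpow_ne_zero _ hπK, ?_⟩
  rw [Units.smul_def, Algebra.smul_def, ← hk, ← zpow_natCast, ← zpow_mul, mul_comm j]

/-- Let `A ⊆ B` be discrete valuation rings with fraction fields `K ⊆ E`, such that some
uniformizer of `A` is also a uniformizer of `B` (an unramified extension). If `x ∈ K^×`
is an `n`-th power in `E^×`, then `x = u · cⁿ` for a unit `u` of `A` and some `c ∈ K^×`. -/
theorem nth_power_descends_unramified (A B K E : Type*)
    [CommRing A] [IsDomain A] [IsDiscreteValuationRing A]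
    [CommRing B] [IsDomain B] [IsDiscreteValuationRing B]
    [Algebra A B] (hinj : Function.Injective (algebraMap A B))
    [Field K] [Algebra A K] [IsFractionRing A K]
    [Field E] [Algebra B E] [IsFractionRing B E]
    [Algebra K E] [Algebra A E] [IsScalarTower A K E] [IsScalarTower A B E]
    (hunram : ∃ π : A, Irreducible π ∧ Irreducible (algebraMap A B π))
    (n : ℕ) (hn : 0 < n) (x : K) (hx : x ≠ 0)
    (hpow : ∃ y : E, y ≠ 0 ∧ y ^ n = algebraMap K E x) :
    ∃ (u : Aˣ) (c : K), c ≠ 0 ∧ x = algebraMap A K u * c ^ n :=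
  nth_power_descends_unramified_general A B K E hunram n x hx hpow
end
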